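/- arXiv:1603.07953 — 5 statements merged into one kernel-verified Lean document; each statement's English description precedes it below -/
import Mathlib

section
/- For every real exponent p with 2 ≤ p < ∞, there exists a constant C > 0 such that for all real numbers a, b: | |a+b|^p − |a|^p − p|a|^{p−2} a b − |b|^p | ≤ C( |a|^{p−2} |b|^2 + |a| · |b|^{p−1} ). -/
/-!
If `|a| ≤ |b|`, each of `|a + b|^p - |b|^p` (mean value theorem), `|a|^p` and `p |a|^(p-1) |b|`
is `O(|a| |b|^(p-1))`. If `|b| ≤ |a|`, the mean value theorem applied to
`t ↦ |a + t b|^p - t p |a|^(p-2) a b` on `[0, 1]`, together with the Lipschitz bound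
`(p - 1) max(|x|, |y|)^(p-2) |x - y|` for `x ↦ |x|^(p-2) x`, bounds the first-order Taylor remainder
by `O(|a|^(p-2) b^2)`, and `|b|^p ≤ |a|^(p-2) |b|^2`.
-/

open Real Set

lemma abs_rpow_sub_rpow_le {r : ℝ} (hr : 1 ≤ r) {s t : ℝ} (hs : 0 ≤ s) (ht : 0 ≤ t) :
    |s ^ r - t ^ r| ≤ r * max s t ^ (r - 1) * |s - t| := by
  have hderiv : ∀ x ∈ Icc 0 (max s t),
      HasDerivWithinAt (· ^ r) (r * x ^ (r - 1)) (Icc 0 (max s t)) x :=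
    fun x _ ↦ (hasDerivAt_rpow_const (Or.inr hr)).hasDerivWithinAt
  have hbound : ∀ x ∈ Icc 0 (max s t), ‖r * x ^ (r - 1)‖ ≤ r * max s t ^ (r - 1) := by
    rintro x ⟨hx, hxM⟩
    rw [norm_of_nonneg (by positivity)]
    gcongr
  simpa [norm_eq_abs] using (convex_Icc 0 (max s t)).norm_image_sub_le_of_norm_hasDerivWithin_le
    hderiv hbound ⟨ht, le_max_right s t⟩ ⟨hs, le_max_left s t⟩

lemma abs_rpow_mul_sub_abs_rpow_mul_le_of_nonneg {q : ℝ} (hq : 0 ≤ q) {x : ℝ} (hx : 0 ≤ x)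
    (y : ℝ) : |(|x| ^ q * x - |y| ^ q * y)| ≤ (q + 1) * max |x| |y| ^ q * |x - y| := by
  rcases le_or_gt 0 y with hy | hy
  · have h := abs_rpow_sub_rpow_le (r := q + 1) (by linarith) hx hy
    rw [add_sub_cancel_right, rpow_add_one' hx (by linarith),
      rpow_add_one' hy (by linarith)] at h
    rwa [abs_of_nonneg hx, abs_of_nonneg hy]
  · set M := max |x| |y|
    have hxM : |x| ^ q ≤ M ^ q := by gcongr; exact le_max_left _ _
    have hyM : |y| ^ q ≤ M ^ q := by gcongr; exact le_max_right _ _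
    have hsplit : |x| ^ q * x - |y| ^ q * y = |x| ^ q * |x| + |y| ^ q * |y| := by
      rw [abs_of_nonneg hx, abs_of_neg hy]; ring
    have hdist : |x - y| = |x| + |y| := by
      rw [abs_of_nonneg hx, abs_of_neg hy, abs_of_pos (by linarith)]; ring
    calc |(|x| ^ q * x - |y| ^ q * y)| = |x| ^ q * |x| + |y| ^ q * |y| := by
          rw [hsplit, abs_of_nonneg (by positivity)]
      _ ≤ M ^ q * |x - y| := by rw [hdist, mul_add]; gcongr
      _ ≤ (q + 1) * M ^ q * |x - y| := by
          have : 0 ≤ M ^ q * |x - y| := by positivity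
          nlinarith

lemma abs_rpow_mul_sub_abs_rpow_mul_le {q : ℝ} (hq : 0 ≤ q) (x y : ℝ) :
    |(|x| ^ q * x - |y| ^ q * y)| ≤ (q + 1) * max |x| |y| ^ q * |x - y| := by
  rcases le_or_gt 0 x with hx | hx
  · exact abs_rpow_mul_sub_abs_rpow_mul_le_of_nonneg hq hx y
  · have h := abs_rpow_mul_sub_abs_rpow_mul_le_of_nonneg hq (neg_nonneg.2 hx.le) (-y)
    rwa [abs_neg, abs_neg, show |x| ^ q * -x - |y| ^ q * -y = -(|x| ^ q * x - |y| ^ q * y) by ring,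
      neg_sub_neg, abs_neg, abs_sub_comm y x] at h

lemma abs_add_rpow_taylor_remainder_le {p : ℝ} (hp : 2 ≤ p) (a b : ℝ) :
    |(|a + b| ^ p - |a| ^ p - p * |a| ^ (p - 2) * a * b)| ≤
      p * (p - 1) * (|a| + |b|) ^ (p - 2) * b ^ 2 := by
  set c := p * |a| ^ (p - 2) * a * b with hc
  have hderiv : ∀ t ∈ Icc (0 : ℝ) 1,
      HasDerivWithinAt (fun t ↦ |a + b * t| ^ p - t * c)
        (p * |a + b * t| ^ (p - 2) * (a + b * t) * b - c) (Icc 0 1) t := by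
    intro t _
    have hline : HasDerivAt (fun t ↦ a + b * t) b t := by
      simpa using ((hasDerivAt_id t).const_mul b).const_add a
    exact (((hasDerivAt_abs_rpow (p := p) _ (by linarith)).comp t hline).sub
      (hasDerivAt_mul_const c)).hasDerivWithinAt
  have hbound : ∀ t ∈ Icc (0 : ℝ) 1,
      ‖p * |a + b * t| ^ (p - 2) * (a + b * t) * b - c‖ ≤
        p * (p - 1) * (|a| + |b|) ^ (p - 2) * b ^ 2 := by
    rintro t ⟨ht0, ht1⟩
    have hbt : |b * t| ≤ |b| := by
      rw [abs_mul, abs_of_nonneg ht0]; exact mul_le_of_le_one_right (abs_nonneg b) ht1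
    have hmax : max |a + b * t| |a| ≤ |a| + |b| :=
      max_le ((abs_add_le a (b * t)).trans (by linarith)) (by linarith [abs_nonneg b])
    have hφ : |(|a + b * t| ^ (p - 2) * (a + b * t) - |a| ^ (p - 2) * a)| ≤
        (p - 1) * (|a| + |b|) ^ (p - 2) * |b| := by
      refine (abs_rpow_mul_sub_abs_rpow_mul_le (by linarith) (a + b * t) a).trans ?_
      rw [show p - 2 + 1 = p - 1 by ring, add_sub_cancel_left]
      have hp1 : 0 ≤ p - 1 := by linarith
      gcongr
    calc ‖p * |a + b * t| ^ (p - 2) * (a + b * t) * b - c‖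
        = |p * b * (|a + b * t| ^ (p - 2) * (a + b * t) - |a| ^ (p - 2) * a)| := by
          rw [norm_eq_abs, hc]; ring_nf
      _ = p * |b| * |(|a + b * t| ^ (p - 2) * (a + b * t) - |a| ^ (p - 2) * a)| := by
          rw [abs_mul, abs_mul, abs_of_nonneg (by linarith : 0 ≤ p)]
      _ ≤ p * |b| * ((p - 1) * (|a| + |b|) ^ (p - 2) * |b|) := by
          gcongr
      _ = p * (p - 1) * (|a| + |b|) ^ (p - 2) * b ^ 2 := by rw [← sq_abs b]; ring
  have h := (convex_Icc (0 : ℝ) 1).norm_image_sub_le_of_norm_hasDerivWithin_le hderiv hbound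
    (left_mem_Icc.2 zero_le_one) (right_mem_Icc.2 zero_le_one)
  convert h using 1
  · simp only [mul_one, mul_zero, add_zero, zero_mul, one_mul, sub_zero, norm_eq_abs]; ring_nf
  · simp

lemma abs_add_rpow_remainder_le_of_abs_le {p : ℝ} (hp : 2 ≤ p) {a b : ℝ} (hab : |a| ≤ |b|) :
    |(|a + b| ^ p - |a| ^ p - p * |a| ^ (p - 2) * a * b - |b| ^ p)| ≤
      (p * 2 ^ (p - 1) + 1 + p) * (|a| * |b| ^ (p - 1)) := by
  have hp0 : 0 ≤ p := by linarith
  have hp1 : 0 ≤ p - 1 := by linarith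
  have hmax : max |a + b| |b| ≤ 2 * |b| :=
    max_le ((abs_add_le a b).trans (by linarith)) (by linarith [abs_nonneg b])
  have hshift : |(|a + b| ^ p - |b| ^ p)| ≤ p * 2 ^ (p - 1) * (|a| * |b| ^ (p - 1)) :=
    calc |(|a + b| ^ p - |b| ^ p)|
        ≤ p * max |a + b| |b| ^ (p - 1) * |(|a + b| - |b|)| :=
          abs_rpow_sub_rpow_le (by linarith) (abs_nonneg _) (abs_nonneg _)
      _ ≤ p * (2 * |b|) ^ (p - 1) * |a| := by
          gcongr p * ?_ ^ _ * ?_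
          simpa using abs_abs_sub_abs_le_abs_sub (a + b) b
      _ = p * 2 ^ (p - 1) * (|a| * |b| ^ (p - 1)) := by
          rw [mul_rpow zero_le_two (abs_nonneg b)]; ring
  have hpow : |a| ^ p ≤ |a| * |b| ^ (p - 1) :=
    calc |a| ^ p = |a| * |a| ^ (p - 1) := by
          rw [← rpow_one_add' (abs_nonneg a) (by linarith), add_sub_cancel]
      _ ≤ |a| * |b| ^ (p - 1) := by gcongr
  have hlin : |p * |a| ^ (p - 2) * a * b| ≤ p * (|a| * |b| ^ (p - 1)) :=
    calc |p * |a| ^ (p - 2) * a * b| = p * (|a| ^ (p - 2) * |b|) * |a| := by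
          rw [abs_mul, abs_mul, abs_mul, abs_of_nonneg hp0, abs_of_nonneg (by positivity)]; ring
      _ ≤ p * (|b| ^ (p - 2) * |b|) * |a| := by gcongr
      _ = p * (|a| * |b| ^ (p - 1)) := by
          rw [← rpow_add_one' (abs_nonneg b) (by linarith), show p - 2 + 1 = p - 1 by ring]; ring
  calc |(|a + b| ^ p - |a| ^ p - p * |a| ^ (p - 2) * a * b - |b| ^ p)|
      = |(|a + b| ^ p - |b| ^ p - |a| ^ p - p * |a| ^ (p - 2) * a * b)| := by ring_nf
    _ ≤ |(|a + b| ^ p - |b| ^ p)| + |a| ^ p + |p * |a| ^ (p - 2) * a * b| := by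
        have h₁ := abs_sub (|a + b| ^ p - |b| ^ p - |a| ^ p) (p * |a| ^ (p - 2) * a * b)
        have h₂ := abs_sub (|a + b| ^ p - |b| ^ p) (|a| ^ p)
        rw [abs_of_nonneg (by positivity : (0 : ℝ) ≤ |a| ^ p)] at h₂
        linarith
    _ ≤ (p * 2 ^ (p - 1) + 1 + p) * (|a| * |b| ^ (p - 1)) := by linarith

lemma abs_add_rpow_remainder_le_of_abs_le' {p : ℝ} (hp : 2 ≤ p) {a b : ℝ} (hba : |b| ≤ |a|) :
    |(|a + b| ^ p - |a| ^ p - p * |a| ^ (p - 2) * a * b - |b| ^ p)| ≤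
      (p * (p - 1) * 2 ^ (p - 2) + 1) * (|a| ^ (p - 2) * |b| ^ (2 : ℝ)) := by
  have hp1 : 0 ≤ p - 1 := by linarith
  have htaylor := abs_add_rpow_taylor_remainder_le hp a b
  have hsum : (|a| + |b|) ^ (p - 2) ≤ 2 ^ (p - 2) * |a| ^ (p - 2) := by
    rw [← mul_rpow zero_le_two (abs_nonneg a)]; gcongr; linarith
  have hpow : |b| ^ p ≤ |a| ^ (p - 2) * |b| ^ (2 : ℝ) :=
    calc |b| ^ p = |b| ^ (p - 2) * |b| ^ (2 : ℝ) := by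
          rw [← rpow_add' (abs_nonneg b) (by linarith), sub_add_cancel]
      _ ≤ |a| ^ (p - 2) * |b| ^ (2 : ℝ) := by gcongr
  rw [rpow_two, sq_abs] at hpow ⊢
  calc |(|a + b| ^ p - |a| ^ p - p * |a| ^ (p - 2) * a * b - |b| ^ p)|
      ≤ |(|a + b| ^ p - |a| ^ p - p * |a| ^ (p - 2) * a * b)| + |b| ^ p := by
        refine (abs_sub _ _).trans_eq ?_
        rw [abs_of_nonneg (by positivity : (0 : ℝ) ≤ |b| ^ p)]
    _ ≤ p * (p - 1) * (2 ^ (p - 2) * |a| ^ (p - 2)) * b ^ 2 + |a| ^ (p - 2) * b ^ 2 := by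
        gcongr
        exact htaylor.trans (by gcongr)
    _ = (p * (p - 1) * 2 ^ (p - 2) + 1) * (|a| ^ (p - 2) * b ^ 2) := by ring

theorem pointwise_second_order_power_estimate (p : ℝ) (hp2 : 2 ≤ p) :
    ∃ C : ℝ, 0 < C ∧ ∀ a b : ℝ,
      |(|a + b| ^ p - |a| ^ p - p * |a| ^ (p - 2) * a * b - |b| ^ p)| ≤
        C * (|a| ^ (p - 2) * |b| ^ (2 : ℝ) + |a| * |b| ^ (p - 1)) := by
  set K₁ := p * 2 ^ (p - 1) + 1 + p
  set K₂ := p * (p - 1) * 2 ^ (p - 2) + 1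
  have hK₁ : 0 ≤ K₁ := by
    have : 0 ≤ p := by linarith
    positivity
  have hK₂ : 0 < K₂ := by
    have : 0 ≤ p * (p - 1) := mul_nonneg (by linarith) (by linarith)
    positivity
  refine ⟨K₁ + K₂, by linarith, fun a b ↦ ?_⟩
  have hA₁ : 0 ≤ |a| ^ (p - 2) * |b| ^ (2 : ℝ) := by positivity
  have hA₂ : 0 ≤ |a| * |b| ^ (p - 1) := by positivity
  rcases le_total |a| |b| with hab | hba
  · have h := abs_add_rpow_remainder_le_of_abs_le hp2 hab
    nlinarith [mul_nonneg hK₁ hA₁, mul_nonneg hK₂.le hA₁, mul_nonneg hK₂.le hA₂]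
  · have h := abs_add_rpow_remainder_le_of_abs_le' hp2 hba
    nlinarith [mul_nonneg hK₁ hA₁, mul_nonneg hK₁ hA₂, mul_nonneg hK₂.le hA₂]
end

section
/- Let (X, μ) be a measure space, 1 < p < ∞, and let (f_n) be a sequence in L^p(X, μ) that is bounded in L^p norm and converges μ-almost everywhere to a measurable function f. Then f ∈ L^p(X, μ) and f_n converges to f weakly in L^p(X, μ). -/
/-!
By Fatou's lemma the a.e. limit inherits the `L^p` bound. For `g ∈ L^q`, `q = p / (p - 1)`,
Hölder's inequality `‖1_s f_n g‖₁ ≤ ‖f_n‖_p ‖1_s g‖_q` transfers the uniform integrability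
and tightness of the single function `g ∈ L^q` (here `q < ∞` is essential) to the family
`f_n g`, uniformly in `n` thanks to the `L^p` bound. Vitali's convergence theorem then upgrades the
a.e. convergence `f_n g → f g` to convergence in `L¹`, so the integrals converge.
-/

open MeasureTheory Filter Topology Real
open scoped ENNReal NNReal

namespace MeasureTheory

variable {α E : Type*} [MeasurableSpace α] {μ : Measure α} [NormedAddCommGroup E]
  {p q r : ℝ≥0∞}

theorem memLp_of_tendsto_ae_of_eLpNorm_le {f : ℕ → α → E} {g : α → E} {C : ℝ≥0}
    (hf : ∀ n, AEStronglyMeasurable (f n) μ) (hC : ∀ n, eLpNorm (f n) p μ ≤ C)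
    (hfg : ∀ᵐ x ∂μ, Tendsto (fun n => f n x) atTop (𝓝 (g x))) :
    MemLp g p μ :=
  ⟨aestronglyMeasurable_of_tendsto_ae atTop hf hfg,
    (Lp.eLpNorm_le_of_ae_tendsto (.of_forall hC) hf hfg).trans_lt ENNReal.coe_lt_top⟩

variable [NormedSpace ℝ E]

theorem eLpNorm_indicator_smul_le [ENNReal.HolderTriple p q r] {φ : α → ℝ} {g : α → E}
    {s : Set α} (hs : MeasurableSet s) (hφ : AEStronglyMeasurable φ μ)
    (hg : AEStronglyMeasurable g μ) :
    eLpNorm (s.indicator (φ • g)) r μ ≤ eLpNorm φ p μ * eLpNorm (s.indicator g) q μ := by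
  rw [show s.indicator (φ • g) = φ • s.indicator g from Set.indicator_smul s φ g]
  exact eLpNorm_smul_le_mul_eLpNorm (hg.indicator hs) hφ

theorem _root_.ENNReal.coe_mul_ofReal_div_add_one_le (C : ℝ≥0) {ε : ℝ} (hε : 0 ≤ ε) :
    (C : ℝ≥0∞) * ENNReal.ofReal (ε / (C + 1)) ≤ ENNReal.ofReal ε := by
  rw [← ENNReal.ofReal_coe_nnreal, ← ENNReal.ofReal_mul C.coe_nonneg]
  gcongr
  rw [mul_div_assoc', div_le_iff₀ (by positivity)]
  nlinarith [C.coe_nonneg]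

section BoundedFamily

variable [ENNReal.HolderTriple p q r] {ι : Type*} {f : ι → α → ℝ} {g : α → E} {C : ℝ≥0}

theorem unifIntegrable_smul_of_eLpNorm_le (hf : ∀ i, AEStronglyMeasurable (f i) μ)
    (hC : ∀ i, eLpNorm (f i) p μ ≤ C) (hq : 1 ≤ q) (hq_top : q ≠ ∞)
    (hg : MemLp g q μ) :
    UnifIntegrable (fun i => f i • g) r μ := by
  intro ε hε
  obtain ⟨δ, hδ, hgδ⟩ :=
    hg.eLpNorm_indicator_le hq hq_top (ε := ε / (C + 1)) (by positivity)
  refine ⟨δ, hδ, fun i s hs hμs => ?_⟩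
  calc eLpNorm (s.indicator (f i • g)) r μ
      ≤ eLpNorm (f i) p μ * eLpNorm (s.indicator g) q μ :=
        eLpNorm_indicator_smul_le hs (hf i) hg.1
    _ ≤ C * ENNReal.ofReal (ε / (C + 1)) := mul_le_mul' (hC i) (hgδ s hs hμs)
    _ ≤ ENNReal.ofReal ε := ENNReal.coe_mul_ofReal_div_add_one_le C hε.le

theorem unifTight_smul_of_eLpNorm_le (hf : ∀ i, AEStronglyMeasurable (f i) μ)
    (hC : ∀ i, eLpNorm (f i) p μ ≤ C) (hq_top : q ≠ ∞) (hg : MemLp g q μ) :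
    UnifTight (fun i => f i • g) r μ := by
  rw [unifTight_iff_real]
  intro ε hε
  have hε' : ENNReal.ofReal (ε / (C + 1)) ≠ 0 := by
    simp only [ne_eq, ENNReal.ofReal_eq_zero, not_le]
    positivity
  obtain ⟨s, hs, hμs, hgs⟩ :=
    (unifTight_const (ι := ι) hq_top hg).exists_measurableSet_indicator hε'
  refine ⟨s, hμs.ne, fun i => ?_⟩
  calc eLpNorm (sᶜ.indicator (f i • g)) r μ
      ≤ eLpNorm (f i) p μ * eLpNorm (sᶜ.indicator g) q μ :=
        eLpNorm_indicator_smul_le hs.compl (hf i) hg.1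
    _ ≤ C * ENNReal.ofReal (ε / (C + 1)) := mul_le_mul' (hC i) (hgs i)
    _ ≤ ENNReal.ofReal ε := ENNReal.coe_mul_ofReal_div_add_one_le C hε.le

end BoundedFamily

theorem tendsto_integral_smul_of_tendsto_ae_of_eLpNorm_le [ENNReal.HolderConjugate p q]
    {f : ℕ → α → ℝ} {flim : α → ℝ} {g : α → E} {C : ℝ≥0}
    (hf : ∀ n, AEStronglyMeasurable (f n) μ) (hC : ∀ n, eLpNorm (f n) p μ ≤ C)
    (hflim : MemLp flim p μ) (hq_top : q ≠ ∞) (hg : MemLp g q μ)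
    (hfg : ∀ᵐ x ∂μ, Tendsto (fun n => f n x) atTop (𝓝 (flim x))) :
    Tendsto (fun n => ∫ x, f n x • g x ∂μ) atTop (𝓝 (∫ x, flim x • g x ∂μ)) := by
  have hmem : ∀ n, MemLp (f n • g) 1 μ := fun n =>
    hg.smul ⟨hf n, (hC n).trans_lt ENNReal.coe_lt_top⟩
  have hmem_lim : MemLp (flim • g) 1 μ := hg.smul hflim
  have hL1 : Tendsto (fun n => eLpNorm (f n • g - flim • g) 1 μ) atTop (𝓝 0) :=
    tendsto_Lp_of_tendsto_ae le_rfl ENNReal.one_ne_top (fun n => (hmem n).1) hmem_lim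
      (unifIntegrable_smul_of_eLpNorm_le hf hC (ENNReal.HolderConjugate.one_le q p) hq_top hg)
      (unifTight_smul_of_eLpNorm_le hf hC hq_top hg)
      (hfg.mono fun x hx => hx.smul_const (g x))
  exact tendsto_integral_of_L1' _ hmem_lim.1
    (.of_forall fun n => memLp_one_iff_integrable.mp (hmem n)) hL1

end MeasureTheory

theorem weak_Lp_convergence_of_ae_convergence_general
    {α : Type*} [MeasurableSpace α] (μ : Measure α) (p : ℝ) (hp : 1 < p)
    (f : ℕ → α → ℝ) (flim : α → ℝ)
    (hmeas : ∀ n, AEStronglyMeasurable (f n) μ)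
    (hbdd : ∃ C : ℝ, ∀ n, eLpNorm (f n) (ENNReal.ofReal p) μ ≤ ENNReal.ofReal C)
    (hae : ∀ᵐ x ∂μ, Tendsto (fun n => f n x) atTop (𝓝 (flim x))) :
    MemLp flim (ENNReal.ofReal p) μ ∧
      ∀ g : α → ℝ, MemLp g (ENNReal.ofReal (p / (p - 1))) μ →
        Tendsto (fun n => ∫ x, f n x * g x ∂μ) atTop (𝓝 (∫ x, flim x * g x ∂μ)) := by
  obtain ⟨C, hC⟩ := hbdd
  have : ENNReal.HolderConjugate (ENNReal.ofReal p) (ENNReal.ofReal (p / (p - 1))) :=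
    (Real.HolderConjugate.conjExponent hp).ennrealOfReal
  have hflim : MemLp flim (ENNReal.ofReal p) μ :=
    memLp_of_tendsto_ae_of_eLpNorm_le (C := C.toNNReal) hmeas hC hae
  exact ⟨hflim, fun g hg =>
    tendsto_integral_smul_of_tendsto_ae_of_eLpNorm_le hmeas hC hflim ENNReal.ofReal_ne_top hg hae⟩

/-- A bounded sequence in `L^p` converging a.e. has its limit in `L^p` and converges weakly
in `L^p`, i.e. against every `g` in the dual `L^{p/(p-1)}`. -/
theorem weak_Lp_convergence_of_ae_convergence
    {α : Type*} [MeasurableSpace α] (μ : Measure α) (p : ℝ) (hp : 1 < p)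
    (f : ℕ → α → ℝ) (flim : α → ℝ)
    (hmeas : ∀ n, AEStronglyMeasurable (f n) μ)
    (hflim : AEStronglyMeasurable flim μ)
    (hbdd : ∃ C : ℝ, ∀ n, eLpNorm (f n) (ENNReal.ofReal p) μ ≤ ENNReal.ofReal C)
    (hae : ∀ᵐ x ∂μ, Tendsto (fun n => f n x) atTop (𝓝 (flim x))) :
    MemLp flim (ENNReal.ofReal p) μ ∧
      ∀ g : α → ℝ, MemLp g (ENNReal.ofReal (p / (p - 1))) μ →
        Tendsto (fun n => ∫ x, f n x * g x ∂μ) atTop (𝓝 (∫ x, flim x * g x ∂μ)) :=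
  weak_Lp_convergence_of_ae_convergence_general μ p hp f flim hmeas hbdd hae
end

section
/- Let (X, μ) be a measure space, 1 < p < ∞, let (v_n) be a sequence in L^p(X, μ) that is bounded in L^p and converges to 0 almost everywhere, and let u ∈ L^p(X, μ). Then ∫ | |v_n + u|^p − |u|^p − |v_n|^p | dμ need not vanish termwise, but ∫ |v_n + u|^p dμ − ∫ |v_n|^p dμ − ∫ |u|^p dμ → 0 as n → ∞. -/
open MeasureTheory Filter Topology Real
open scoped NNReal

/-! For every `ε > 0` there is `C` with `| |a + b|^p - |a|^p | ≤ ε |a|^p + C |b|^p`: by convexity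
the left side is at most `p (|a| + |b|)^(p-1) |b|`, which is split according to
whether `|b| ≤ δ |a|`. Hence the truncated defect
`(| |vₙ + u|^p - |vₙ|^p - |u|^p | - ε |vₙ|^p)⁺` is dominated by `(C + 1) |u|^p` and tends to `0`
a.e., so its integral tends to `0`; what remains is at most `ε supₙ ∫ |vₙ|^p`, and `ε` is
arbitrary. Only continuity of `|·|^p`, its vanishing at `0` and the `ε`-inequality enter. -/

namespace Real

lemma rpow_sub_rpow_le_mul_rpow_sub_one {p x y : ℝ} (hp : 1 ≤ p) (hy : 0 ≤ y) (hyx : y ≤ x) :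
    x ^ p - y ^ p ≤ p * x ^ (p - 1) * (x - y) := by
  rcases hyx.eq_or_lt with rfl | hlt
  · simp
  have h := (convexOn_rpow hp).slope_le_of_hasDerivAt hy (hy.trans hlt.le) hlt
    (hasDerivAt_rpow_const (Or.inr hp))
  rwa [slope_def_field, div_le_iff₀ (sub_pos.2 hlt)] at h

lemma abs_rpow_sub_rpow_le_mul {p x y : ℝ} (hp : 1 ≤ p) (hx : 0 ≤ x) (hy : 0 ≤ y) :
    |x ^ p - y ^ p| ≤ p * max x y ^ (p - 1) * |x - y| := by
  wlog hyx : y ≤ x generalizing x y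
  · rw [abs_sub_comm, abs_sub_comm x, max_comm]
    exact this hy hx (le_of_not_ge hyx)
  rw [max_eq_left hyx, abs_of_nonneg (sub_nonneg.2 hyx),
    abs_of_nonneg (sub_nonneg.2 (rpow_le_rpow hy hyx (by linarith)))]
  exact rpow_sub_rpow_le_mul_rpow_sub_one hp hy hyx

lemma add_rpow_sub_one_mul_le {p y z δ : ℝ} (hp : 1 ≤ p) (hy : 0 ≤ y) (hz : 0 ≤ z)
    (hδ₀ : 0 < δ) (hδ₁ : δ ≤ 1) :
    (y + z) ^ (p - 1) * z ≤ 2 ^ (p - 1) * δ * y ^ p + (2 / δ) ^ (p - 1) * z ^ p := by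
  have hpow : ∀ t : ℝ, 0 ≤ t → t ^ (p - 1) * t = t ^ p := fun t ht => by
    rw [← rpow_add_one' ht (by linarith), sub_add_cancel]
  rcases le_total z (δ * y) with hzy | hyz
  · calc (y + z) ^ (p - 1) * z ≤ (2 * y) ^ (p - 1) * (δ * y) :=
          mul_le_mul (rpow_le_rpow (by positivity) (by nlinarith) (by linarith)) hzy hz
            (by positivity)
      _ = 2 ^ (p - 1) * δ * y ^ p := by rw [mul_rpow zero_le_two hy, ← hpow y hy]; ring
      _ ≤ _ := le_add_of_nonneg_right (by positivity)
  · have hyz' : y + z ≤ 2 / δ * z := by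
      rw [div_mul_eq_mul_div, le_div_iff₀ hδ₀]; nlinarith
    calc (y + z) ^ (p - 1) * z ≤ (2 / δ * z) ^ (p - 1) * z :=
          mul_le_mul_of_nonneg_right (rpow_le_rpow (by positivity) hyz' (by linarith)) hz
      _ = (2 / δ) ^ (p - 1) * z ^ p := by
          rw [mul_rpow (by positivity) hz, mul_assoc, hpow z hz]
      _ ≤ _ := le_add_of_nonneg_left (by positivity)

end Real

theorem exists_abs_norm_add_rpow_sub_norm_rpow_le {E : Type*} [SeminormedAddCommGroup E]
    {p ε : ℝ} (hp : 1 ≤ p) (hε : 0 < ε) :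
    ∃ C ≥ 0, ∀ a b : E, |‖a + b‖ ^ p - ‖a‖ ^ p| ≤ ε * ‖a‖ ^ p + C * ‖b‖ ^ p := by
  set δ := min 1 (ε / (p * 2 ^ (p - 1)))
  have hK : 0 < p * 2 ^ (p - 1) := by positivity
  have hδ₀ : 0 < δ := lt_min one_pos (by positivity)
  have hδε : p * 2 ^ (p - 1) * δ ≤ ε := by
    rw [mul_comm, ← le_div_iff₀ hK]; exact min_le_right _ _
  refine ⟨p * (2 / δ) ^ (p - 1), by positivity, fun a b => ?_⟩
  have hmax : max ‖a + b‖ ‖a‖ ≤ ‖a‖ + ‖b‖ :=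
    max_le (norm_add_le a b) (le_add_of_nonneg_right (norm_nonneg b))
  have hdiff : |‖a + b‖ - ‖a‖| ≤ ‖b‖ := by simpa using abs_norm_sub_norm_le (a + b) a
  calc |‖a + b‖ ^ p - ‖a‖ ^ p|
      ≤ p * max ‖a + b‖ ‖a‖ ^ (p - 1) * |‖a + b‖ - ‖a‖| :=
        abs_rpow_sub_rpow_le_mul hp (norm_nonneg _) (norm_nonneg _)
    _ ≤ p * ((‖a‖ + ‖b‖) ^ (p - 1) * ‖b‖) := by
        rw [mul_assoc]
        gcongr
    _ ≤ p * (2 ^ (p - 1) * δ * ‖a‖ ^ p + (2 / δ) ^ (p - 1) * ‖b‖ ^ p) := by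
        gcongr
        exact add_rpow_sub_one_mul_le hp (norm_nonneg a) (norm_nonneg b) hδ₀ (min_le_left _ _)
    _ ≤ ε * ‖a‖ ^ p + p * (2 / δ) ^ (p - 1) * ‖b‖ ^ p := by
        nlinarith [mul_le_mul_of_nonneg_right hδε (rpow_nonneg (norm_nonneg a) p)]

section BrezisLieb

variable {α E : Type*} [MeasurableSpace α] {μ : Measure α}
  [TopologicalSpace E] [AddZeroClass E] [ContinuousAdd E] {j : E → ℝ} {v : ℕ → α → E} {u : α → E}

lemma tendsto_integral_truncated_defect (hj : Continuous j) (hj0 : j 0 = 0)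
    {ε C : ℝ} (hC₀ : 0 ≤ C) (hC : ∀ a b, |j (a + b) - j a| ≤ ε * |j a| + C * |j b|)
    (hv : ∀ n, Integrable (fun x => j (v n x)) μ)
    (hvu : ∀ n, Integrable (fun x => j (v n x + u x)) μ) (hu : Integrable (fun x => j (u x)) μ)
    (hae : ∀ᵐ x ∂μ, Tendsto (fun n => v n x) atTop (𝓝 0)) :
    Tendsto (fun n => ∫ x, max (|j (v n x + u x) - j (v n x) - j (u x)| - ε * |j (v n x)|) 0 ∂μ)
      atTop (𝓝 0) := by
  have hmeas : ∀ n, AEStronglyMeasurable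
      (fun x => max (|j (v n x + u x) - j (v n x) - j (u x)| - ε * |j (v n x)|) 0) μ := fun n =>
    ((((hvu n).sub (hv n)).sub hu).abs.sub ((hv n).abs.const_mul ε)).pos_part.aestronglyMeasurable
  have hbound : ∀ n, ∀ᵐ x ∂μ,
      ‖max (|j (v n x + u x) - j (v n x) - j (u x)| - ε * |j (v n x)|) 0‖ ≤ (C + 1) * |j (u x)| :=
    fun n => ae_of_all _ fun x => by
      rw [Real.norm_of_nonneg (le_max_right _ _)]
      refine max_le ?_ (by positivity)
      have := abs_sub (j (v n x + u x) - j (v n x)) (j (u x))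
      linarith [hC (v n x) (u x)]
  have hlim : ∀ᵐ x ∂μ, Tendsto (fun n =>
      max (|j (v n x + u x) - j (v n x) - j (u x)| - ε * |j (v n x)|) 0) atTop (𝓝 0) := by
    filter_upwards [hae] with x hx
    have hjv : Tendsto (fun n => j (v n x)) atTop (𝓝 0) := hj0 ▸ (hj.tendsto 0).comp hx
    have hjvu : Tendsto (fun n => j (v n x + u x)) atTop (𝓝 (j (u x))) :=
      (hj.tendsto _).comp (by simpa using hx.add_const (u x))
    simpa using ((((hjvu.sub hjv).sub_const (j (u x))).abs.sub (hjv.abs.const_mul ε)).max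
      tendsto_const_nhds : Tendsto _ atTop (𝓝 (max (|j (u x) - 0 - j (u x)| - ε * |0|) 0)))
  simpa using tendsto_integral_of_dominated_convergence _ hmeas (hu.abs.const_mul (C + 1)) hbound
    hlim

theorem tendsto_integral_comp_add_sub_sub (hj : Continuous j) (hj0 : j 0 = 0)
    (hjε : ∀ ε > 0, ∃ C ≥ 0, ∀ a b, |j (a + b) - j a| ≤ ε * |j a| + C * |j b|)
    (hv : ∀ n, Integrable (fun x => j (v n x)) μ)
    (hvu : ∀ n, Integrable (fun x => j (v n x + u x)) μ) (hu : Integrable (fun x => j (u x)) μ)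
    (hbdd : ∃ M, ∀ n, ∫ x, |j (v n x)| ∂μ ≤ M)
    (hae : ∀ᵐ x ∂μ, Tendsto (fun n => v n x) atTop (𝓝 0)) :
    Tendsto (fun n => (∫ x, j (v n x + u x) ∂μ) - (∫ x, j (v n x) ∂μ) - ∫ x, j (u x) ∂μ)
      atTop (𝓝 0) := by
  obtain ⟨M, hM⟩ := hbdd
  rw [Metric.tendsto_nhds]
  intro ε hε
  set δ := ε / (2 * (|M| + 1))
  have hδ : 0 < δ := by positivity
  have hδM : δ * M < ε / 2 := by
    rw [div_mul_eq_mul_div, div_lt_div_iff₀ (by positivity) two_pos]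
    nlinarith [le_abs_self M]
  obtain ⟨C, hC₀, hC⟩ := hjε δ hδ
  filter_upwards [(tendsto_integral_truncated_defect hj hj0 hC₀ hC hv hvu hu
    hae).eventually (gt_mem_nhds (half_pos hε))] with n hn
  have hg : Integrable (fun x => j (v n x + u x) - j (v n x)) μ := (hvu n).sub (hv n)
  have hW : Integrable
      (fun x => max (|j (v n x + u x) - j (v n x) - j (u x)| - δ * |j (v n x)|) 0) μ :=
    ((hg.sub hu).abs.sub ((hv n).abs.const_mul δ)).pos_part
  rw [Real.dist_eq, sub_zero, ← integral_sub (hvu n) (hv n), ← integral_sub hg hu]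
  calc |∫ x, j (v n x + u x) - j (v n x) - j (u x) ∂μ|
      ≤ ∫ x, |j (v n x + u x) - j (v n x) - j (u x)| ∂μ := abs_integral_le_integral_abs
    _ ≤ ∫ x, (max (|j (v n x + u x) - j (v n x) - j (u x)| - δ * |j (v n x)|) 0
          + δ * |j (v n x)|) ∂μ := by
        refine integral_mono (hg.sub hu).abs (hW.add ((hv n).abs.const_mul δ)) fun x => ?_
        linarith [le_max_left (|j (v n x + u x) - j (v n x) - j (u x)| - δ * |j (v n x)|) 0]
    _ = (∫ x, max (|j (v n x + u x) - j (v n x) - j (u x)| - δ * |j (v n x)|) 0 ∂μ)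
          + δ * ∫ x, |j (v n x)| ∂μ := by
        rw [integral_add hW ((hv n).abs.const_mul δ), integral_const_mul]
    _ < ε / 2 + δ * M := add_lt_add_of_lt_of_le hn (mul_le_mul_of_nonneg_left (hM n) hδ.le)
    _ < ε := by linarith

end BrezisLieb

section Power

variable {α E : Type*} [MeasurableSpace α] {μ : Measure α} [NormedAddCommGroup E]

lemma integral_norm_rpow_le_of_eLpNorm_le {f : α → E} {p : ℝ} (hp : 0 < p)
    (hf : AEStronglyMeasurable f μ) {C : ℝ≥0} (hC : eLpNorm f (ENNReal.ofReal p) μ ≤ C) :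
    ∫ x, ‖f x‖ ^ p ∂μ ≤ C ^ p := by
  have h := lpNorm_eq_integral_norm_rpow_toReal (by simpa using hp) ENNReal.ofReal_ne_top hf
  rw [ENNReal.toReal_ofReal hp.le] at h
  have hint : ∫ x, ‖f x‖ ^ p ∂μ = lpNorm f (ENNReal.ofReal p) μ ^ p := by
    rw [h, ← rpow_mul (integral_nonneg fun x => by positivity), inv_mul_cancel₀ hp.ne', rpow_one]
  rw [hint, ← toReal_eLpNorm hf]
  gcongr
  exact ENNReal.toReal_le_coe_of_le_coe hC

theorem tendsto_integral_norm_add_rpow_sub_sub {p : ℝ} (hp : 1 ≤ p) {v : ℕ → α → E}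
    {u : α → E} {C : ℝ≥0} (hv : ∀ n, AEStronglyMeasurable (v n) μ)
    (hbdd : ∀ n, eLpNorm (v n) (ENNReal.ofReal p) μ ≤ C) (hu : MemLp u (ENNReal.ofReal p) μ)
    (hae : ∀ᵐ x ∂μ, Tendsto (fun n => v n x) atTop (𝓝 0)) :
    Tendsto (fun n =>
        (∫ x, ‖v n x + u x‖ ^ p ∂μ) - (∫ x, ‖v n x‖ ^ p ∂μ) - ∫ x, ‖u x‖ ^ p ∂μ)
      atTop (𝓝 0) := by
  have hp₀ : 0 < p := by linarith
  have hint {f : α → E} (hf : MemLp f (ENNReal.ofReal p) μ) :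
      Integrable (fun x => ‖f x‖ ^ p) μ := by
    simpa [ENNReal.toReal_ofReal hp₀.le] using
      hf.integrable_norm_rpow (by simpa using hp₀) ENNReal.ofReal_ne_top
  have hvL (n : ℕ) : MemLp (v n) (ENNReal.ofReal p) μ :=
    ⟨hv n, (hbdd n).trans_lt ENNReal.coe_lt_top⟩
  refine tendsto_integral_comp_add_sub_sub (j := fun a : E => ‖a‖ ^ p)
    (continuous_norm.rpow_const fun _ => Or.inr hp₀.le) (by simp [hp₀.ne']) (fun ε hε => ?_)
    (fun n => hint (hvL n)) (fun n => hint ((hvL n).add hu)) (hint hu) ⟨C ^ p, fun n => ?_⟩ hae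
  · simpa only [abs_rpow_of_nonneg (norm_nonneg _), abs_norm] using
      exists_abs_norm_add_rpow_sub_norm_rpow_le (E := E) hp hε
  · simpa only [abs_rpow_of_nonneg (norm_nonneg _), abs_norm] using
      integral_norm_rpow_le_of_eLpNorm_le hp₀ (hv n) (hbdd n)

end Power

/-- Brezis–Lieb lemma for the `p`-th power of the absolute value: if `(v n)` is bounded in
`L^p` and converges to `0` a.e., and `u ∈ L^p`, then
`∫ |vₙ+u|^p − ∫ |vₙ|^p − ∫ |u|^p → 0`. -/
theorem brezis_lieb_power
    {α : Type*} [MeasurableSpace α] (μ : Measure α) (p : ℝ) (hp : 1 < p)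
    (v : ℕ → α → ℝ) (u : α → ℝ)
    (hmeas : ∀ n, AEStronglyMeasurable (v n) μ)
    (hbdd : ∃ C : ℝ, ∀ n, eLpNorm (v n) (ENNReal.ofReal p) μ ≤ ENNReal.ofReal C)
    (hae : ∀ᵐ x ∂μ, Tendsto (fun n => v n x) atTop (𝓝 0))
    (hu : MemLp u (ENNReal.ofReal p) μ) :
    Tendsto (fun n =>
        (∫ x, |v n x + u x| ^ p ∂μ) - (∫ x, |v n x| ^ p ∂μ) - (∫ x, |u x| ^ p ∂μ))
      atTop (𝓝 0) := by
  obtain ⟨C, hC⟩ := hbdd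
  simpa only [Real.norm_eq_abs] using
    tendsto_integral_norm_add_rpow_sub_sub (C := C.toNNReal) hp.le hmeas hC hu hae
end

section
/- Let n, k be positive integers with 2k < n and q = 2n/(n−2k). Let H be a Hilbert space continuously embedded in L^q of a finite measure space, with a Sobolev-type inequality ‖u‖_{L^q}^2 ≤ (K+ε) Q(u) + B_ε ‖u‖_*^2 for all ε > 0, where Q(u) = ‖u‖_H^2 and ‖·‖_* is compact relative to ‖·‖_H. Suppose (v_n) ⊂ H satisfies v_n ⇀ 0 weakly in H, ‖v_n‖_* → 0, Q(v_n) − ‖v_n‖_{L^q}^q → 0, and (1/2)Q(v_n) − (1/q)‖v_n‖_{L^q}^q → β with 0 ≤ β < (k/n) K^{−n/(2k)}. Then Q(v_n) → 0 and hence v_n → 0 strongly in H. -/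
open Filter Topology Real

/-!
Since `1/2 - 1/q = k/n`, the two energy limits give `Q(v_m) → A` and `‖v_m‖_q^q → A` with
`A = (n/k) β`. Passing to the limit in the Sobolev inequality, where the compact term vanishes
and `ε` is arbitrary, yields `A^(2/q) ≤ K A`, i.e. `A^(1 - 2k/n) ≤ K A`. For `A > 0` this means
`K^(-n/(2k)) ≤ A`, which is exactly the excluded range `β ≥ (k/n) K^(-n/(2k))`; hence `A = 0`.
-/

section

variable {ι : Type*} {l : Filter ι}

theorem tendsto_of_tendsto_rpow {x : ι → ℝ} {q A : ℝ} (hx : ∀ i, 0 ≤ x i) (hq : 0 < q)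
    (h : Tendsto (fun i => x i ^ q) l (𝓝 A)) : Tendsto x l (𝓝 (A ^ q⁻¹)) := by
  refine ((continuousAt_rpow_const A q⁻¹ (Or.inr (inv_pos.2 hq).le)).tendsto.comp h).congr
    fun i => ?_
  simp only [Function.comp_apply, rpow_rpow_inv (hx i) hq.ne']

theorem tendsto_of_tendsto_sub_of_tendsto_energy {Q L : ι → ℝ} {q β : ℝ}
    (hQL : Tendsto (fun i => Q i - L i) l (𝓝 0))
    (hE : Tendsto (fun i => 1 / 2 * Q i - 1 / q * L i) l (𝓝 β)) (hc : 1 / 2 - 1 / q ≠ 0) :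
    Tendsto Q l (𝓝 (β / (1 / 2 - 1 / q))) := by
  have := (hE.sub (hQL.const_mul (1 / q))).div_const (1 / 2 - 1 / q)
  rw [mul_zero, sub_zero] at this
  refine this.congr fun i => ?_
  rw [show 1 / 2 * Q i - 1 / q * L i - 1 / q * (Q i - L i) = (1 / 2 - 1 / q) * Q i by ring,
    mul_div_cancel_left₀ _ hc]

theorem le_mul_of_tendsto_of_forall_le_add [l.NeBot] {x y z : ι → ℝ} {a b K : ℝ}
    (hx : Tendsto x l (𝓝 a)) (hy : Tendsto y l (𝓝 b)) (hz : Tendsto z l (𝓝 0))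
    (h : ∀ ε > 0, ∃ B, ∀ i, x i ≤ (K + ε) * y i + B * z i) : a ≤ K * b := by
  have hle : ∀ ε > 0, a ≤ (K + ε) * b := fun ε hε => by
    obtain ⟨B, hB⟩ := h ε hε
    have hrhs := (hy.const_mul (K + ε)).add (hz.const_mul B)
    rw [mul_zero, add_zero] at hrhs
    exact le_of_tendsto_of_tendsto' hx hrhs hB
  have hlim : Tendsto (fun ε => (K + ε) * b) (𝓝[>] 0) (𝓝 (K * b)) := by
    have hcont : Continuous fun ε : ℝ => (K + ε) * b := by fun_prop
    simpa using (hcont.tendsto 0).mono_left nhdsWithin_le_nhds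
  exact ge_of_tendsto hlim (eventually_nhdsWithin_of_forall hle)

end

theorem eq_zero_of_rpow_one_sub_le_mul {A K θ : ℝ} (hA : 0 ≤ A) (hθ : 0 < θ)
    (h : A ^ (1 - θ) ≤ K * A) (hlt : A < K ^ (-θ⁻¹)) : A = 0 := by
  rcases hA.eq_or_lt with hA0 | hpos
  · exact hA0.symm
  have hK : A ^ (-θ) ≤ K := by
    rw [sub_eq_add_neg, rpow_add hpos, rpow_one, mul_comm K] at h
    exact le_of_mul_le_mul_left h hpos
  have hge : K ^ (-θ⁻¹) ≤ A := by
    calc K ^ (-θ⁻¹) ≤ (A ^ (-θ)) ^ (-θ⁻¹) :=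
          rpow_le_rpow_of_nonpos (rpow_pos_of_pos hpos _) hK (by simpa using hθ.le)
      _ = A := by rw [← rpow_mul hA, neg_mul_neg, mul_inv_cancel₀ hθ.ne', rpow_one]
  exact absurd hlt hge.not_gt

theorem strong_convergence_below_threshold_general
    {H : Type*} [NormedAddCommGroup H] [InnerProductSpace ℝ H]
    (n k : ℕ) (hk : 0 < k) (h2k : 2 * k < n)
    (q : ℝ) (hq : q = 2 * n / ((n : ℝ) - 2 * k))
    (K : ℝ)
    (Lq Nstar : H → ℝ) (hLq : ∀ u, 0 ≤ Lq u)
    (hsob : ∀ ε > (0 : ℝ), ∃ B : ℝ, ∀ u : H,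
      Lq u ^ 2 ≤ (K + ε) * ‖u‖ ^ 2 + B * Nstar u ^ 2)
    (v : ℕ → H)
    (hNs : Tendsto (fun m => Nstar (v m)) atTop (𝓝 0))
    (hPS : Tendsto (fun m => ‖v m‖ ^ 2 - Lq (v m) ^ q) atTop (𝓝 0))
    (β : ℝ)
    (hβ : Tendsto (fun m => (1 / 2) * ‖v m‖ ^ 2 - (1 / q) * Lq (v m) ^ q) atTop (𝓝 β))
    (hβlt : β < (k : ℝ) / n * K ^ (-(n : ℝ) / (2 * k))) :
    Tendsto (fun m => ‖v m‖) atTop (𝓝 0) := by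
  have hk' : (0 : ℝ) < k := by exact_mod_cast hk
  have hd : (0 : ℝ) < n - 2 * k := sub_pos.2 (by exact_mod_cast h2k)
  have hn : (0 : ℝ) < n := by linarith
  have hq0 : 0 < q := hq ▸ div_pos (by positivity) hd
  have hc : 1 / 2 - 1 / q = k / n := by rw [hq]; field_simp; ring
  have hexp : q⁻¹ * 2 = 1 - 2 * k / n := by rw [hq]; field_simp
  have hQ := tendsto_of_tendsto_sub_of_tendsto_energy hPS hβ (hc ▸ by positivity)
  set A := β / (1 / 2 - 1 / q)
  have hL : Tendsto (fun m => Lq (v m) ^ q) atTop (𝓝 A) := by simpa using hQ.sub hPS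
  have hA0 : 0 ≤ A := ge_of_tendsto' hQ fun m => sq_nonneg _
  have hsobA : A ^ (1 - 2 * k / n : ℝ) ≤ K * A := by
    have := le_mul_of_tendsto_of_forall_le_add
      ((tendsto_of_tendsto_rpow (fun m => hLq _) hq0 hL).pow 2) hQ (by simpa using hNs.pow 2)
      fun ε hε => (hsob ε hε).imp fun B hB m => hB (v m)
    rwa [← rpow_natCast, ← rpow_mul hA0, Nat.cast_ofNat, hexp] at this
  have hA : A = 0 := by
    refine eq_zero_of_rpow_one_sub_le_mul hA0 (by positivity) hsobA ?_
    rwa [inv_div, ← neg_div, div_lt_iff₀' (hc ▸ by positivity), hc]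
  rw [hA] at hQ
  simpa [sqrt_sq (norm_nonneg _)] using hQ.sqrt

/-- Abstract form of Step 3: a Palais–Smale-type sequence converging weakly to `0`, with
energy level `β` below the threshold `(k/n) K^{-n/2k}`, converges strongly to `0`. -/
theorem strong_convergence_below_threshold
    {H : Type*} [NormedAddCommGroup H] [InnerProductSpace ℝ H]
    (n k : ℕ) (hk : 0 < k) (h2k : 2 * k < n)
    (q : ℝ) (hq : q = 2 * n / ((n : ℝ) - 2 * k))
    (K : ℝ) (hK : 0 < K)
    (Lq Nstar : H → ℝ) (hLq : ∀ u, 0 ≤ Lq u) (hNstar : ∀ u, 0 ≤ Nstar u)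
    (hsob : ∀ ε > (0 : ℝ), ∃ B : ℝ, ∀ u : H,
      Lq u ^ 2 ≤ (K + ε) * ‖u‖ ^ 2 + B * Nstar u ^ 2)
    (v : ℕ → H)
    (hweak : ∀ w : H, Tendsto (fun m => (inner ℝ (v m) w : ℝ)) atTop (𝓝 0))
    (hNs : Tendsto (fun m => Nstar (v m)) atTop (𝓝 0))
    (hPS : Tendsto (fun m => ‖v m‖ ^ 2 - Lq (v m) ^ q) atTop (𝓝 0))
    (β : ℝ)
    (hβ : Tendsto (fun m => (1 / 2) * ‖v m‖ ^ 2 - (1 / q) * Lq (v m) ^ q) atTop (𝓝 β))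
    (hβ0 : 0 ≤ β) (hβlt : β < (k : ℝ) / n * K ^ (-(n : ℝ) / (2 * k))) :
    Tendsto (fun m => ‖v m‖) atTop (𝓝 0) :=
  strong_convergence_below_threshold_general n k hk h2k q hq K Lq Nstar hLq hsob v hNs hPS β hβ hβlt
end

section
/- Let f: ℝ^n → (0, ∞) be integrable and of the form f(x) = h(|x − a|) where h: [0,∞) → (0,∞) is strictly decreasing. Then for every z ≠ a, ∫_{B_z(1)} f dx < ∫_{B_a(1)} f dx. -/
/-!
The two unit balls share `B_a ∩ B_z`, so only the lunes `B_a \ B_z` and `B_z \ B_a` matter.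
They have equal finite measure by translation invariance of Lebesgue measure, and the first one
is not null since it contains the nonempty open set `B_a \ closedBall z 1`. The integrand
exceeds `h 1` on the first lune and is at most `h 1` on the second.
-/

open MeasureTheory Metric Set
open scoped ENNReal

section SetIntegral

variable {X : Type*} [MeasurableSpace X] {μ : Measure X} {f : X → ℝ} {s t : Set X} {c : ℝ}

theorem setIntegral_lt_setIntegral_of_le_of_lt (hs : MeasurableSet s) (ht : MeasurableSet t)
    (hμ : μ t = μ s) (hs_fin : μ s ≠ ∞) (hs_pos : 0 < μ s)
    (hfs : IntegrableOn f s μ) (hft : IntegrableOn f t μ)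
    (hle : ∀ x ∈ t, f x ≤ c) (hlt : ∀ x ∈ s, c < f x) :
    ∫ x in t, f x ∂μ < ∫ x in s, f x ∂μ := by
  have hc : IntegrableOn (fun _ ↦ c) s μ := integrableOn_const hs_fin
  have h_pos : 0 < ∫ x in s, (f x - c) ∂μ := by
    rw [setIntegral_pos_iff_support_of_nonneg_ae (f := fun x ↦ f x - c) ?_ (hfs.sub hc)]
    · rwa [inter_eq_right.2 fun x hx ↦ Function.mem_support.2 (sub_ne_zero.2 (hlt x hx).ne')]
    · filter_upwards [ae_restrict_mem hs] with x hx using sub_nonneg.2 (hlt x hx).le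
  rw [integral_sub hfs hc] at h_pos
  calc ∫ x in t, f x ∂μ ≤ ∫ _ in t, c ∂μ :=
        setIntegral_mono_on hft (integrableOn_const (hμ ▸ hs_fin)) ht hle
    _ = ∫ _ in s, c ∂μ := by simp only [setIntegral_const, measureReal_def, hμ]
    _ < ∫ x in s, f x ∂μ := by linarith

theorem setIntegral_lt_setIntegral_of_measure_eq (hs : MeasurableSet s) (ht : MeasurableSet t)
    (hμ : μ t = μ s) (hs_fin : μ s ≠ ∞) (hpos : 0 < μ (s \ t))
    (hfs : IntegrableOn f s μ) (hft : IntegrableOn f t μ)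
    (hle : ∀ x ∈ t \ s, f x ≤ c) (hlt : ∀ x ∈ s \ t, c < f x) :
    ∫ x in t, f x ∂μ < ∫ x in s, f x ∂μ := by
  have hμ_diff : μ (t \ s) = μ (s \ t) :=
    measure_sdiff_symm ht.nullMeasurableSet hs.nullMeasurableSet hμ
      (measure_ne_top_of_subset inter_subset_right hs_fin)
  rw [← integral_inter_add_sdiff hs hft, ← integral_inter_add_sdiff ht hfs, inter_comm]
  gcongr ?_ + ?_
  exact setIntegral_lt_setIntegral_of_le_of_lt (hs.diff ht) (ht.diff hs) hμ_diff
    (measure_ne_top_of_subset sdiff_subset hs_fin) hpos (hfs.mono_set sdiff_subset)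
    (hft.mono_set sdiff_subset) hle hlt

end SetIntegral

section Ball

variable {E : Type*} [NormedAddCommGroup E] [NormedSpace ℝ E]

theorem ball_sdiff_closedBall_nonempty {a z : E} (hz : z ≠ a) {r : ℝ} (hr : 0 < r) :
    (ball a r \ closedBall z r).Nonempty := by
  by_contra hempty
  rw [not_nonempty_iff_eq_empty, sdiff_eq_empty] at hempty
  have hsub := closure_mono hempty
  rw [closure_ball a hr.ne', isClosed_closedBall.closure_eq] at hsub
  have hd : 0 < ‖a - z‖ := norm_pos_iff.2 (sub_ne_zero.2 hz.symm)
  -- the point of `closedBall a r` farthest from `z`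
  set p := a + (r / ‖a - z‖) • (a - z)
  have hpa : dist p a = r := by
    simp [p, dist_eq_norm, norm_smul, abs_of_pos hr, hd.ne']
  have hpz : dist p z = r + ‖a - z‖ := by
    have : p - z = (r / ‖a - z‖ + 1) • (a - z) := by simp only [p]; module
    rw [dist_eq_norm, this, norm_smul, Real.norm_of_nonneg (by positivity), add_mul,
      div_mul_cancel₀ _ hd.ne', one_mul]
  have := hsub (mem_closedBall.2 hpa.le)
  rw [mem_closedBall, hpz] at this
  linarith

variable [MeasurableSpace E] (μ : Measure E) [μ.IsAddHaarMeasure]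

theorem measure_ball_sdiff_ball_pos {a z : E} (hz : z ≠ a) {r : ℝ} (hr : 0 < r) :
    0 < μ (ball a r \ ball z r) :=
  (isOpen_ball.sdiff isClosed_closedBall).measure_pos μ (ball_sdiff_closedBall_nonempty hz hr)
    |>.trans_le <| measure_mono <| sdiff_subset_sdiff_right ball_subset_closedBall

variable [BorelSpace E] [FiniteDimensional ℝ E]

theorem setIntegral_ball_lt_setIntegral_ball_of_strictAntiOn {h : ℝ → ℝ}
    (hanti : StrictAntiOn h (Ici 0)) {a z : E} (hz : z ≠ a) {r : ℝ} (hr : 0 < r)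
    (hint : IntegrableOn (fun x ↦ h ‖x - a‖) (ball a r ∪ ball z r) μ) :
    ∫ x in ball z r, h ‖x - a‖ ∂μ < ∫ x in ball a r, h ‖x - a‖ ∂μ := by
  refine setIntegral_lt_setIntegral_of_measure_eq (c := h r) measurableSet_ball measurableSet_ball
    (by rw [μ.addHaar_ball_center z, μ.addHaar_ball_center a]) measure_ball_lt_top.ne
    (measure_ball_sdiff_ball_pos μ hz hr) (hint.mono_set subset_union_left)
    (hint.mono_set subset_union_right) (fun x hx ↦ ?_) (fun x hx ↦ ?_)
  · have hxa : r ≤ ‖x - a‖ := by simpa [dist_eq_norm] using hx.2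
    exact hanti.antitoneOn hr.le (norm_nonneg _) hxa
  · have hxa : ‖x - a‖ < r := by simpa [dist_eq_norm] using hx.1
    exact hanti (norm_nonneg _) hr.le hxa

end Ball

theorem ball_integral_strictly_maximized_at_center_general
    (n : ℕ) (a : EuclideanSpace ℝ (Fin n)) (h : ℝ → ℝ)
    (hanti : StrictAntiOn h (Set.Ici (0 : ℝ)))
    (hint : Integrable (fun x : EuclideanSpace ℝ (Fin n) => h ‖x - a‖)) :
    ∀ z : EuclideanSpace ℝ (Fin n), z ≠ a →
      (∫ x in Metric.ball z 1, h ‖x - a‖) < ∫ x in Metric.ball a 1, h ‖x - a‖ :=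
  fun _ hz ↦ setIntegral_ball_lt_setIntegral_ball_of_strictAntiOn volume hanti hz one_pos
    hint.integrableOn

/-- The integral of a positive, radially strictly decreasing integrable function over a unit
ball is uniquely maximized when the ball is centered at the center of symmetry. -/
theorem ball_integral_strictly_maximized_at_center
    (n : ℕ) (hn : 0 < n) (a : EuclideanSpace ℝ (Fin n)) (h : ℝ → ℝ)
    (hpos : ∀ r : ℝ, 0 ≤ r → 0 < h r)
    (hanti : StrictAntiOn h (Set.Ici (0 : ℝ)))
    (hint : Integrable (fun x : EuclideanSpace ℝ (Fin n) => h ‖x - a‖)) :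
    ∀ z : EuclideanSpace ℝ (Fin n), z ≠ a →
      (∫ x in Metric.ball z 1, h ‖x - a‖) < ∫ x in Metric.ball a 1, h ‖x - a‖ :=
  ball_integral_strictly_maximized_at_center_general n a h hanti hint
end
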